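/- arXiv:2107.11148 — 6 statements merged into one kernel-verified Lean document; each statement's English description precedes it below -/
import Mathlib

section
/- Let ζ = z·conj(w) with ζ ∈ ℂ ∖ (E_sz ∪ {1}) and set ρ = |ζ·e^{1−ζ}|. Then (i) ρ ≤ 1, and (ii) for every η > 0 there is a constant C such that for all positive integers n and all z, w ∈ ℂ with ζ = z·conj(w) ∈ ℂ ∖ E_sz and |ζ − 1| ≥ η, one has K_n(z,w) = n·exp(n·z·conj(w) − n|z|²/2 − n|w|²/2)·(1 + r_n(z,w)) with |r_n(z,w)| ≤ C·ρ^n/√n. -/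
/-!
Write `ρ(ζ) = |ζ e^{1-ζ}| = |ζ| e^{1 - Re ζ}`. Inside the unit disc `ρ` increases outwards along
every ray, so a point with `|ζ| > 1` or `ρ(ζ) > 1` is joined to the circle of radius `2` by a
radial segment avoiding `γ_sz`; hence `ℂ ∖ E_sz` lies in `{|ζ| ≤ 1, ρ ≤ 1}`. There `ρ ≤ 1` gives
`Re ζ ≥ 1 + log |ζ|`, so `|ζ - 1| ≥ η` forces `|ζ| ≤ 1 - δ(η)`.

The kernel is `n e^{nζ - n|z|²/2 - n|w|²/2}` times `e^{-nζ} ∑_{j<n} (nζ)^j/j!`, whose distance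
to `1` is `|e^{-nζ}|` times the exponential tail `∑_{j≥n} (nζ)^j/j!`. With `|ζ| ≤ 1 - δ` that tail
is a geometric series of ratio at most `1 - δ` times `(n|ζ|)^n/n! ≤ (e|ζ|)^n/√n` (Stirling), and
`|e^{-nζ}| (e|ζ|)^n = ρ^n`.
-/

open Complex

/-- The Ginibre kernel `K_n(z,w) = n·(∑_{j<n} (n z w̄)^j/j!)·exp(−n|z|²/2 − n|w|²/2)`. -/
noncomputable def ginibreK (n : ℕ) (z w : ℂ) : ℂ :=
  (n : ℂ) * (∑ j ∈ Finset.range n, ((n : ℂ) * z * (starRingEnd ℂ) w) ^ j / (Nat.factorial j : ℂ)) *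
    Complex.exp (-((n : ℂ) * ((‖z‖ ^ 2 : ℝ) : ℂ) / 2)
      - (n : ℂ) * ((‖w‖ ^ 2 : ℝ) : ℂ) / 2)

/-- The Szegő curve `γ_sz = {z : |z| ≤ 1, |z e^{1−z}| = 1}`. -/
def szegoCurve : Set ℂ :=
  {z : ℂ | ‖z‖ ≤ 1 ∧ ‖z * Complex.exp (1 - z)‖ = 1}

/-- The exterior Szegő domain: the connected component of `ℂ ∖ γ_sz` containing `2`
(the unbounded component). -/
def extSzego : Set ℂ := connectedComponentIn szegoCurveᶜ (2 : ℂ)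

open Finset Nat

lemma norm_mul_exp_one_sub (ζ : ℂ) :
    ‖ζ * Complex.exp (1 - ζ)‖ = ‖ζ‖ * Real.exp (1 - ζ.re) := by
  simp [Complex.norm_exp]

lemma norm_mul_exp_one_sub_le_ofReal_mul {ζ : ℂ} {c : ℝ} (hc : 1 ≤ c) (hcζ : c * ‖ζ‖ ≤ 1) :
    ‖ζ * Complex.exp (1 - ζ)‖ ≤ ‖(c * ζ) * Complex.exp (1 - c * ζ)‖ := by
  have hc0 : 0 < c := by linarith
  have hlog : (c - 1) * ζ.re ≤ Real.log c :=
    calc (c - 1) * ζ.re ≤ (c - 1) * (1 / c) := by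
          gcongr
          exact (Complex.re_le_norm ζ).trans ((le_div_iff₀' hc0).2 hcζ)
      _ = 1 - c⁻¹ := by field_simp
      _ ≤ Real.log c := Real.one_sub_inv_le_log_of_pos hc0
  rw [norm_mul_exp_one_sub, norm_mul_exp_one_sub, norm_mul, Complex.norm_real,
    Real.norm_of_nonneg hc0.le, Complex.re_ofReal_mul]
  calc ‖ζ‖ * Real.exp (1 - ζ.re)
      = ‖ζ‖ * Real.exp (1 - c * ζ.re) * Real.exp ((c - 1) * ζ.re) := by
        rw [mul_assoc, ← Real.exp_add]; ring_nf
    _ ≤ ‖ζ‖ * Real.exp (1 - c * ζ.re) * c := by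
        gcongr
        exact (Real.exp_le_exp.2 hlog).trans_eq (Real.exp_log hc0)
    _ = c * ‖ζ‖ * Real.exp (1 - c * ζ.re) := by ring

lemma notMem_szegoCurve_of_one_lt {ζ : ℂ} (h : 1 < ‖ζ‖ ∨ 1 < ‖ζ * Complex.exp (1 - ζ)‖) :
    ζ ∉ szegoCurve := by
  rintro ⟨hζ, hρ⟩
  rcases h with h | h <;> linarith

lemma mem_extSzego_of_one_lt {ζ : ℂ} (h : 1 < ‖ζ‖ ∨ 1 < ‖ζ * Complex.exp (1 - ζ)‖) :
    ζ ∈ extSzego := by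
  have hζ : ζ ≠ 0 := by rintro rfl; norm_num at h
  set t := ‖ζ‖ with ht_def
  have ht : 0 < t := norm_pos_iff.2 hζ
  set ray : Set ℂ := (fun c : ℝ => (c : ℂ) * ζ) '' Set.uIcc 1 (2 / t)
  have hray : IsPreconnected ray := isPreconnected_uIcc.image _ (by fun_prop)
  have hsphere : IsPreconnected (Metric.sphere (0 : ℂ) 2) :=
    isPreconnected_sphere (by simp [Complex.rank_real_complex]) 0 2
  have hmeet : ((2 / t : ℝ) : ℂ) * ζ ∈ Metric.sphere (0 : ℂ) 2 ∩ ray :=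
    ⟨by simp [abs_of_pos ht, ← ht_def, ht.ne'], 2 / t, Set.right_mem_uIcc, rfl⟩
  have hray_compl : ray ⊆ szegoCurveᶜ := by
    rintro _ ⟨c, hc, rfl⟩
    apply notMem_szegoCurve_of_one_lt
    rw [norm_mul, Complex.norm_real, Real.norm_eq_abs]
    by_cases hct : 1 < c * t
    · exact Or.inl (hct.trans_le (by gcongr; exact le_abs_self c))
    have hc1 : 1 ≤ c := by
      rcases Set.mem_uIcc.1 hc with hc | hc
      · exact hc.1
      · by_contra! hc1
        linarith [(div_le_iff₀ ht).1 hc.1]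
    have ht1 : ¬ 1 < t := fun ht1 => hct (by nlinarith)
    exact Or.inr ((h.resolve_left ht1).trans_le
      (norm_mul_exp_one_sub_le_ofReal_mul hc1 (not_lt.1 hct)))
  have hsphere_compl : Metric.sphere (0 : ℂ) 2 ⊆ szegoCurveᶜ := fun ξ hξ =>
    notMem_szegoCurve_of_one_lt (Or.inl (by rw [mem_sphere_zero_iff_norm.1 hξ]; norm_num))
  have hsub := (hsphere.union _ hmeet.1 hmeet.2 hray).subset_connectedComponentIn
    (by simp : (2 : ℂ) ∈ Metric.sphere 0 2 ∪ ray) (Set.union_subset hsphere_compl hray_compl)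
  exact hsub (Or.inr ⟨1, Set.left_mem_uIcc, by simp⟩)

lemma norm_le_one_of_notMem_extSzego {ζ : ℂ} (hζ : ζ ∉ extSzego) :
    ‖ζ‖ ≤ 1 ∧ ‖ζ * Complex.exp (1 - ζ)‖ ≤ 1 := by
  simpa [not_or] using mt mem_extSzego_of_one_lt hζ

lemma two_sub_inv_norm_le_re {ζ : ℂ} (hζ : ζ ≠ 0) (hρ : ‖ζ * Complex.exp (1 - ζ)‖ ≤ 1) :
    2 - ‖ζ‖⁻¹ ≤ ζ.re := by
  have ht : 0 < ‖ζ‖ := norm_pos_iff.2 hζ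
  rw [norm_mul_exp_one_sub, ← Real.exp_log ht, ← Real.exp_add, Real.exp_le_one_iff] at hρ
  linarith [Real.one_sub_inv_le_log_of_pos ht]

lemma norm_le_one_sub_of_notMem_extSzego {ζ : ℂ} {η : ℝ} (hζ : ζ ∉ extSzego) (hη : 0 ≤ η)
    (hζη : η ≤ ‖ζ - 1‖) : ‖ζ‖ ≤ 1 - min (1 / 2) (η ^ 2 / 4) := by
  obtain ⟨ht1, hρ⟩ := norm_le_one_of_notMem_extSzego hζ
  set t := ‖ζ‖ with ht_def
  rcases le_or_gt t (1 / 2) with ht | ht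
  · linarith [min_le_left (1 / 2 : ℝ) (η ^ 2 / 4)]
  have hζ0 : ζ ≠ 0 := by rintro rfl; norm_num [t] at ht
  have hre := two_sub_inv_norm_le_re hζ0 hρ
  have hdist : ‖ζ - 1‖ ^ 2 = t ^ 2 - 2 * ζ.re + 1 := by
    rw [← Complex.normSq_eq_norm_sq, Complex.normSq_sub, ht_def, ← Complex.normSq_eq_norm_sq]
    simp only [map_one, mul_one]
    ring
  -- `1/t ≤ 3 - 2t` on `[1/2, 1]`, so `‖ζ - 1‖² ≤ t² - 3 + 2/t ≤ (1 - t)(3 - t)`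
  have hquad : η ^ 2 ≤ 4 * (1 - t) := by
    have hinv : t⁻¹ ≤ 3 - 2 * t := by
      rw [inv_le_iff_one_le_mul₀ (by linarith)]; nlinarith
    nlinarith [pow_le_pow_left₀ hη hζη 2]
  linarith [min_le_right (1 / 2 : ℝ) (η ^ 2 / 4)]

lemma norm_exp_sub_sum_range_le {x : ℂ} {n : ℕ} (hx : ‖x‖ < n + 1) :
    ‖Complex.exp x - ∑ m ∈ range n, x ^ m / (m ! : ℂ)‖ ≤
      ‖x‖ ^ n / n ! * (1 - ‖x‖ / (n + 1))⁻¹ := by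
  set q := ‖x‖ / (n + 1)
  have hq0 : 0 ≤ q := by positivity
  have hq1 : q < 1 := (div_lt_one (by positivity)).2 hx
  have hexp := NormedSpace.expSeries_div_hasSum_exp x
  rw [← Complex.exp_eq_exp_ℂ] at hexp
  rw [← hexp.tsum_eq, ← hexp.summable.sum_add_tsum_nat_add n, add_sub_cancel_left]
  refine tsum_of_norm_bounded ((hasSum_geometric_of_lt_one hq0 hq1).mul_left _) fun k => ?_
  have hfact : (n ! * (n + 1) ^ k : ℝ) ≤ (k + n)! := by
    exact_mod_cast add_comm n k ▸ Nat.factorial_mul_pow_le_factorial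
  calc ‖x ^ (k + n) / (k + n)!‖ = ‖x‖ ^ (k + n) / (k + n)! := by simp
    _ ≤ ‖x‖ ^ (k + n) / (n ! * (n + 1) ^ k) := by gcongr
    _ = ‖x‖ ^ n / n ! * q ^ k := by rw [div_pow, pow_add]; field_simp

lemma pow_div_factorial_le {n : ℕ} (hn : n ≠ 0) {t : ℝ} (ht : 0 ≤ t) :
    (n * t) ^ n / n ! ≤ (t * Real.exp 1) ^ n / √n := by
  have hn0 : (0 : ℝ) < n := by positivity
  have hstirling : √n * (n / Real.exp 1) ^ n ≤ n ! :=
    le_trans (by gcongr; nlinarith [Real.pi_gt_three]) (Stirling.le_factorial_stirling n)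
  calc (n * t) ^ n / n ! ≤ (n * t) ^ n / (√n * (n / Real.exp 1) ^ n) := by gcongr
    _ = (t * Real.exp 1) ^ n / √n := by rw [mul_pow, mul_pow, div_pow]; field_simp

lemma norm_sum_range_mul_exp_neg_sub_one_le {n : ℕ} (hn : n ≠ 0) {ζ : ℂ} {δ : ℝ} (hδ : 0 < δ)
    (hζ : ‖ζ‖ ≤ 1 - δ) :
    ‖(∑ j ∈ range n, ((n : ℂ) * ζ) ^ j / (j ! : ℂ)) * Complex.exp (-(n * ζ)) - 1‖ ≤
      δ⁻¹ * ‖ζ * Complex.exp (1 - ζ)‖ ^ n / √n := by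
  set t := ‖ζ‖
  have hn0 : (0 : ℝ) < n := by positivity
  have hx : ‖(n : ℂ) * ζ‖ = n * t := by simp [t]
  have hq : δ ≤ 1 - n * t / (n + 1) := by
    have : n * t / (n + 1) ≤ t := by
      rw [div_le_iff₀ (by positivity)]; nlinarith [norm_nonneg ζ]
    linarith
  have htail := norm_exp_sub_sum_range_le (x := n * ζ) (n := n)
    (by rw [hx]; nlinarith [norm_nonneg ζ])
  rw [hx] at htail
  calc ‖(∑ j ∈ range n, ((n : ℂ) * ζ) ^ j / (j ! : ℂ)) * Complex.exp (-(n * ζ)) - 1‖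
      = ‖Complex.exp (n * ζ) - ∑ j ∈ range n, ((n : ℂ) * ζ) ^ j / (j ! : ℂ)‖ *
          Real.exp (-(n * ζ.re)) := by
        have hexp : Complex.exp (n * ζ) * Complex.exp (-(n * ζ)) = 1 := by
          rw [← Complex.exp_add, add_neg_cancel, Complex.exp_zero]
        rw [← hexp, ← mul_sub_right_distrib, norm_mul, norm_sub_rev, Complex.norm_exp]
        simp
    _ ≤ (t * Real.exp 1) ^ n / √n * δ⁻¹ * Real.exp (-(n * ζ.re)) := by
        gcongr
        exact htail.trans (mul_le_mul (pow_div_factorial_le hn (norm_nonneg ζ))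
          (inv_anti₀ hδ hq) (inv_nonneg.2 (hδ.le.trans hq)) (by positivity))
    _ = δ⁻¹ * ‖ζ * Complex.exp (1 - ζ)‖ ^ n / √n := by
        rw [norm_mul_exp_one_sub, mul_pow, mul_pow, ← Real.exp_nat_mul, ← Real.exp_nat_mul,
          show (n : ℝ) * (1 - ζ.re) = n * 1 + -(n * ζ.re) by ring, Real.exp_add]
        ring

lemma ginibreK_eq (n : ℕ) (z w : ℂ) :
    ginibreK n z w =
      n * Complex.exp (n * (z * starRingEnd ℂ w) - n * ((‖z‖ ^ 2 : ℝ) : ℂ) / 2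
        - n * ((‖w‖ ^ 2 : ℝ) : ℂ) / 2) *
      ((∑ j ∈ range n, ((n : ℂ) * (z * starRingEnd ℂ w)) ^ j / (j ! : ℂ)) *
        Complex.exp (-(n * (z * starRingEnd ℂ w)))) := by
  rw [mul_comm (∑ j ∈ _, _), ← mul_assoc (_ * Complex.exp _), mul_assoc (n : ℂ),
    ← Complex.exp_add, ginibreK, mul_right_comm]
  ring_nf

/-- Bulk type asymptotics for the Ginibre kernel: if `ζ = z·w̄ ∈ ℂ ∖ (E_sz ∪ {1})` then
`ρ = |ζe^{1−ζ}| ≤ 1`, and away from `ζ = 1` one has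
`K_n(z,w) = n·exp(nζ − n|z|²/2 − n|w|²/2)·(1 + O(ρⁿ/√n))`. -/
theorem bulk_asymptotics_ginibre :
    (∀ ζ : ℂ, ζ ∉ extSzego → ζ ≠ 1 → ‖ζ * Complex.exp (1 - ζ)‖ ≤ 1) ∧
    (∀ η : ℝ, 0 < η → ∃ C : ℝ, ∀ n : ℕ, 1 ≤ n → ∀ z w : ℂ,
      z * (starRingEnd ℂ) w ∉ extSzego →
      η ≤ ‖z * (starRingEnd ℂ) w - 1‖ →
      ∃ r : ℂ,
        ginibreK n z w =
          (n : ℂ) * Complex.exp ((n : ℂ) * (z * (starRingEnd ℂ) w)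
            - (n : ℂ) * ((‖z‖ ^ 2 : ℝ) : ℂ) / 2
            - (n : ℂ) * ((‖w‖ ^ 2 : ℝ) : ℂ) / 2) * (1 + r) ∧
        ‖r‖ ≤
          C * ‖z * (starRingEnd ℂ) w *
            Complex.exp (1 - z * (starRingEnd ℂ) w)‖ ^ n / Real.sqrt n) := by
  refine ⟨fun ζ hζ _ => (norm_le_one_of_notMem_extSzego hζ).2, fun η hη => ?_⟩
  have hδ : 0 < min (1 / 2 : ℝ) (η ^ 2 / 4) := by positivity
  refine ⟨(min (1 / 2) (η ^ 2 / 4))⁻¹, fun n hn z w hζ hζη => ⟨_, ?_,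
    norm_sum_range_mul_exp_neg_sub_one_le (by omega) hδ
      (norm_le_one_sub_of_notMem_extSzego hζ hη.le hζη)⟩⟩
  rw [ginibreK_eq, add_sub_cancel]
end

section
/- There exists a sequence of real numbers b_0, b_1, b_2, … with b_0 = 1 and b_1 = −1/12 such that for every integer k ≥ 0 there is a constant C_k with |n^n·e^{−n}/(n−1)! − √(n/(2π))·(b_0 + b_1/n + … + b_k/n^k)| ≤ C_k·√(n/(2π))·n^{−k−1} for all positive integers n. -/
/-!
Put `μ n = log (√π / stirlingSeq n)`, so that `nⁿe⁻ⁿ/(n-1)! = √(n/2π) · exp (μ n)`, `μ n → 0`,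
and `μ n - μ (n+1) = 1 - (n + 1/2) log (1 + 1/n) = -1/(12 n²) + ⋯` has a Taylor expansion in `1/n`.

Asymptotic expansions in powers of `1/n`, with their coefficients recorded as a formal power
series, add, multiply, invert and exponentiate like the power series themselves. The heart of the
proof is discrete integration: if `h → 0` and `h n - h (n+1)` has an expansion starting at `n⁻²`,
so does `h`, starting at `n⁻¹`. Its coefficients solve a triangular system because
`n⁻ʲ - (n+1)⁻ʲ = j n⁻⁽ʲ⁺¹⁾ + ⋯`, and the remainder is controlled by comparing `h` with a multiple
of `n⁻⁽ᴷ⁺¹⁾`. Hence `μ n = -1/(12 n) + ⋯`, and exponentiating gives `b₀ = 1`, `b₁ = -1/12`.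
-/

open Filter Asymptotics Topology PowerSeries
open scoped Polynomial

noncomputable section

/-- `F n = a₀ + a₁ n⁻¹ + ⋯ + a_K n⁻ᴷ + O(n^{-(K+1)})`: the variable of `a` stands for `n⁻¹`. -/
def HasExpansion (K : ℕ) (F : ℕ → ℝ) (a : ℝ⟦X⟧) : Prop :=
  (fun n : ℕ => F n - (trunc (K + 1) a).eval (n : ℝ)⁻¹) =O[atTop]
    fun n : ℕ => ((n : ℝ)⁻¹) ^ (K + 1)

lemma isBigO_eval_inv_natCast_one (p : ℝ[X]) :
    (fun n : ℕ => p.eval (n : ℝ)⁻¹) =O[atTop] fun _ => (1 : ℝ) :=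
  ((p.continuous.tendsto 0).comp tendsto_inv_atTop_nhds_zero_nat).isBigO_one ℝ

lemma isBigO_eval_inv_natCast_of_X_pow_dvd {p : ℝ[X]} {m : ℕ} (h : Polynomial.X ^ m ∣ p) :
    (fun n : ℕ => p.eval (n : ℝ)⁻¹) =O[atTop] fun n : ℕ => ((n : ℝ)⁻¹) ^ m := by
  obtain ⟨q, rfl⟩ := h
  simpa using (isBigO_refl (fun n : ℕ => ((n : ℝ)⁻¹) ^ m) atTop).mul
    (isBigO_eval_inv_natCast_one q)

lemma X_pow_dvd_sub_trunc {R : Type*} [CommRing R] (p : R[X]) (m : ℕ) :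
    Polynomial.X ^ m ∣ p - trunc m (p : R⟦X⟧) :=
  Polynomial.X_pow_dvd_iff.2 fun d hd => by
    rw [Polynomial.coeff_sub, coeff_trunc, if_pos hd, Polynomial.coeff_coe, sub_self]

lemma isBigO_inv_natCast_pow_of_le {k m : ℕ} (h : k ≤ m) :
    (fun n : ℕ => ((n : ℝ)⁻¹) ^ m) =O[atTop] fun n : ℕ => ((n : ℝ)⁻¹) ^ k := by
  refine IsBigO.of_bound 1 (eventually_atTop.2 ⟨1, fun n hn => ?_⟩)
  have : (n : ℝ)⁻¹ ≤ 1 := inv_le_one_of_one_le₀ (by exact_mod_cast hn)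
  simp only [norm_pow, norm_inv, RCLike.norm_natCast, one_mul]
  exact pow_le_pow_of_le_one (by positivity) this h

lemma hasExpansion_eval (p : ℝ[X]) (K : ℕ) : HasExpansion K (fun n => p.eval (n : ℝ)⁻¹) p := by
  simpa only [HasExpansion, ← Polynomial.eval_sub] using
    isBigO_eval_inv_natCast_of_X_pow_dvd (X_pow_dvd_sub_trunc p (K + 1))

lemma coeff_pow_eq_zero_of_lt {R : Type*} [CommSemiring R] {a : R⟦X⟧} (ha : constantCoeff a = 0)
    {i m : ℕ} (h : i < m) :
    coeff i (a ^ m) = 0 := by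
  obtain ⟨b, rfl⟩ := X_dvd_iff.2 ha
  rw [mul_pow, coeff_X_pow_mul', if_neg (by omega)]

/-- `exp ∘ a` for `a₀ = 0`: the coefficient of `Xⁱ` in `∑ₘ aᵐ / m!` only involves `m ≤ i`. -/
def expComp (a : ℝ⟦X⟧) : ℝ⟦X⟧ :=
  mk fun i => ∑ m ∈ Finset.range (i + 1), coeff i (a ^ m) / m.factorial

lemma coeff_zero_expComp (a : ℝ⟦X⟧) : coeff 0 (expComp a) = 1 := by
  simp [expComp]

lemma coeff_one_expComp (a : ℝ⟦X⟧) : coeff 1 (expComp a) = coeff 1 a := by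
  simp [expComp, Finset.sum_range_succ]

namespace HasExpansion

variable {K : ℕ} {F G : ℕ → ℝ} {a b : ℝ⟦X⟧}

lemma of_trunc_eq (h : HasExpansion K F a) (hab : trunc (K + 1) a = trunc (K + 1) b) :
    HasExpansion K F b := by
  rwa [HasExpansion, ← hab]

lemma congr (h : HasExpansion K F a) (hFG : F =ᶠ[atTop] G) : HasExpansion K G a :=
  IsBigO.congr' h (hFG.mono fun n hn => by simp [hn]) EventuallyEq.rfl

lemma of_isBigO_sub (h : HasExpansion K F a)
    (hFG : (fun n => G n - F n) =O[atTop] fun n : ℕ => ((n : ℝ)⁻¹) ^ (K + 1)) :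
    HasExpansion K G a :=
  (hFG.add h).congr_left fun n => by ring

lemma isBigO_of_trunc_eq_zero (h : HasExpansion K F a) (ha : trunc (K + 1) a = 0) :
    F =O[atTop] fun n : ℕ => ((n : ℝ)⁻¹) ^ (K + 1) := by
  simpa [HasExpansion, ha] using h

lemma tendsto (h : HasExpansion K F a) : Tendsto F atTop (𝓝 (constantCoeff a)) := by
  have hP : Tendsto (fun n : ℕ => (trunc (K + 1) a).eval (n : ℝ)⁻¹) atTop
      (𝓝 (constantCoeff a)) := by
    have := ((trunc (K + 1) a).continuous.tendsto 0).comp tendsto_inv_atTop_nhds_zero_nat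
    rwa [← Polynomial.coeff_zero_eq_eval_zero, coeff_trunc, if_pos K.succ_pos,
      coeff_zero_eq_constantCoeff_apply] at this
  have hx : Tendsto (fun n : ℕ => ((n : ℝ)⁻¹) ^ (K + 1)) atTop (𝓝 0) := by
    simpa using (tendsto_inv_atTop_nhds_zero_nat (𝕜 := ℝ)).pow (K + 1)
  simpa using (h.trans_tendsto hx).add hP

lemma isBigO_one (h : HasExpansion K F a) : F =O[atTop] fun _ => (1 : ℝ) :=
  h.tendsto.isBigO_one ℝ

lemma add (hF : HasExpansion K F a) (hG : HasExpansion K G b) :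
    HasExpansion K (fun n => F n + G n) (a + b) :=
  (IsBigO.add hF hG).congr_left fun n => by simp only [map_add, Polynomial.eval_add]; ring

lemma sub (hF : HasExpansion K F a) (hG : HasExpansion K G b) :
    HasExpansion K (fun n => F n - G n) (a - b) :=
  (IsBigO.sub hF hG).congr_left fun n => by simp only [map_sub, Polynomial.eval_sub]; ring

lemma mul (hF : HasExpansion K F a) (hG : HasExpansion K G b) :
    HasExpansion K (fun n => F n * G n) (a * b) := by
  set P := trunc (K + 1) a
  set Q := trunc (K + 1) b
  have hPQ : HasExpansion K (fun n => (P * Q).eval (n : ℝ)⁻¹) (a * b) :=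
    (hasExpansion_eval (P * Q) K).of_trunc_eq
      (by rw [Polynomial.coe_mul, trunc_trunc_mul_trunc])
  refine hPQ.of_isBigO_sub ?_
  have h1 : (fun n => F n * (G n - Q.eval (n : ℝ)⁻¹)) =O[atTop]
      fun n : ℕ => ((n : ℝ)⁻¹) ^ (K + 1) := by
    simpa using hF.isBigO_one.mul hG
  have h2 : (fun n : ℕ => Q.eval (n : ℝ)⁻¹ * (F n - P.eval (n : ℝ)⁻¹)) =O[atTop]
      fun n : ℕ => ((n : ℝ)⁻¹) ^ (K + 1) := by
    simpa using (isBigO_eval_inv_natCast_one Q).mul hF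
  exact (h1.add h2).congr_left fun n => by rw [Polynomial.eval_mul]; ring

lemma pow (h : HasExpansion K F a) (m : ℕ) : HasExpansion K (fun n => F n ^ m) (a ^ m) := by
  induction m with
  | zero => simpa using hasExpansion_eval 1 K
  | succ m ih => simpa only [pow_succ] using ih.mul h

lemma aeval (h : HasExpansion K F a) (p : ℝ[X]) :
    HasExpansion K (fun n => p.eval (F n)) (Polynomial.aeval a p) := by
  induction p using Polynomial.induction_on' with
  | add p q hp hq => simpa only [Polynomial.eval_add, map_add] using hp.add hq
  | monomial m c =>
    simpa [Polynomial.aeval_monomial] using (hasExpansion_eval (Polynomial.C c) K).mul (h.pow m)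

lemma inv (h : HasExpansion K F a) (ha : constantCoeff a ≠ 0) :
    HasExpansion K (fun n => (F n)⁻¹) a⁻¹ := by
  set Q := trunc (K + 1) a⁻¹
  have hFQ : (fun n => F n * Q.eval (n : ℝ)⁻¹ - 1) =O[atTop]
      fun n : ℕ => ((n : ℝ)⁻¹) ^ (K + 1) := by
    have := (h.mul (hasExpansion_eval Q K)).of_trunc_eq (b := 1)
      (by rw [trunc_mul_trunc, PowerSeries.mul_inv_cancel _ ha])
    simpa [HasExpansion] using this
  have hinv : (fun n => (F n)⁻¹) =O[atTop] fun _ => (1 : ℝ) := (h.tendsto.inv₀ ha).isBigO_one ℝ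
  refine ((hasExpansion_eval Q K).of_trunc_eq (trunc_trunc _)).of_isBigO_sub ?_
  have key : (fun n => (F n)⁻¹ * -(F n * Q.eval (n : ℝ)⁻¹ - 1)) =O[atTop]
      fun n : ℕ => ((n : ℝ)⁻¹) ^ (K + 1) := by
    simpa using hinv.mul hFQ.neg_left
  refine key.congr' ?_ EventuallyEq.rfl
  filter_upwards [h.tendsto.eventually_ne ha] with n hn
  field_simp
  ring

lemma isBigO_inv_natCast (h : HasExpansion K F a) (ha : constantCoeff a = 0) :
    F =O[atTop] fun n : ℕ => (n : ℝ)⁻¹ := by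
  have hP : Polynomial.X ^ 1 ∣ trunc (K + 1) a := by
    rw [pow_one, Polynomial.X_dvd_iff, coeff_trunc, if_pos K.succ_pos,
      coeff_zero_eq_constantCoeff_apply, ha]
  simpa using (IsBigO.trans h (isBigO_inv_natCast_pow_of_le (by omega : 1 ≤ K + 1))).add
    (isBigO_eval_inv_natCast_of_X_pow_dvd hP)

lemma exp (h : HasExpansion K F a) (ha : constantCoeff a = 0) :
    HasExpansion K (fun n => Real.exp (F n)) (expComp a) := by
  set P : ℝ[X] :=
    ∑ m ∈ Finset.range (K + 1), Polynomial.C (m.factorial : ℝ)⁻¹ * Polynomial.X ^ m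
  have hPF : ∀ n, P.eval (F n) = ∑ m ∈ Finset.range (K + 1), F n ^ m / m.factorial := fun n => by
    simp [P, Polynomial.eval_finsetSum, div_eq_inv_mul]
  have hP : HasExpansion K (fun n => P.eval (F n)) (expComp a) := by
    refine (h.aeval P).of_trunc_eq (Polynomial.ext fun i => ?_)
    rw [coeff_trunc, coeff_trunc]
    split_ifs with hi
    · simp only [P, expComp, coeff_mk, map_sum, map_mul, Polynomial.aeval_C,
        Polynomial.aeval_X_pow, PowerSeries.algebraMap_apply, Algebra.algebraMap_self,
        RingHom.id_apply, coeff_C_mul]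
      simp_rw [inv_mul_eq_div]
      refine (Finset.sum_subset (Finset.range_subset_range.2 (by omega)) fun m _ hm => ?_).symm
      rw [coeff_pow_eq_zero_of_lt ha (by simpa using hm), zero_div]
    · rfl
  refine hP.of_isBigO_sub ?_
  have hsmall : ∀ᶠ n in atTop, |F n| ≤ 1 := by
    have := h.tendsto
    rw [ha] at this
    exact (this.abs.eventually (ge_mem_nhds (by simp : |(0 : ℝ)| < 1)))
  have hrem : (fun n => Real.exp (F n) - P.eval (F n)) =O[atTop] fun n => F n ^ (K + 1) := by
    refine IsBigO.of_bound ((K + 1 + 1) / ((K + 1).factorial * (K + 1))) ?_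
    filter_upwards [hsmall] with n hn
    rw [hPF, Real.norm_eq_abs, norm_pow, Real.norm_eq_abs, mul_comm]
    simpa using Real.exp_bound hn K.succ_pos
  simpa using hrem.trans ((h.isBigO_inv_natCast ha).pow (K + 1))

lemma exists_bound (h : HasExpansion K F a) :
    ∃ C : ℝ, ∀ n : ℕ, 1 ≤ n →
      |F n - ∑ j ∈ Finset.range (K + 1), coeff j a / (n : ℝ) ^ j| ≤ C / (n : ℝ) ^ (K + 1) := by
  obtain ⟨C, -, hC⟩ := bound_of_isBigO_nat_atTop h
  refine ⟨C, fun n hn => ?_⟩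
  have hn0 : (n : ℝ) ≠ 0 := by positivity
  have := hC (x := n) (pow_ne_zero _ (inv_ne_zero hn0))
  simpa [Polynomial.eval, eval₂_trunc_eq_sum_range, div_eq_mul_inv] using this

end HasExpansion

lemma inv_natCast_pow_le_two_pow_mul_sub (K : ℕ) {n : ℕ} (hn : 1 ≤ n) :
    ((n : ℝ)⁻¹) ^ (K + 2) ≤ 2 ^ (K + 1) * (((n : ℝ)⁻¹) ^ (K + 1) - ((n : ℝ) + 1)⁻¹ ^ (K + 1)) := by
  have hn' : (1 : ℝ) ≤ n := by exact_mod_cast hn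
  set x := (n : ℝ)⁻¹
  set y := ((n : ℝ) + 1)⁻¹
  have hx : 0 ≤ x := by positivity
  have hy : 0 ≤ y := by positivity
  have hyx : y ≤ x := inv_anti₀ (by positivity) (by linarith)
  have hxy : x / 2 ≤ y := by
    rw [div_eq_mul_inv, ← mul_inv]
    exact inv_anti₀ (by positivity) (by linarith)
  have hsub : x - y = x * y := by
    simp only [x, y]; field_simp; ring
  have hpow : x * y ^ K ≤ x * x ^ K := by gcongr
  calc x ^ (K + 2) = 2 ^ (K + 1) * (x * (x / 2) ^ (K + 1)) := by
        rw [div_pow]; field_simp; ring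
    _ ≤ 2 ^ (K + 1) * (x * y ^ (K + 1)) := by gcongr
    _ = 2 ^ (K + 1) * ((x - y) * y ^ K) := by rw [hsub]; ring
    _ ≤ 2 ^ (K + 1) * (x ^ (K + 1) - y ^ (K + 1)) := by
      gcongr
      rw [pow_succ, pow_succ]
      linarith

lemma le_of_sub_succ_le {u w : ℕ → ℝ} {N : ℕ} (hu : Tendsto u atTop (𝓝 0))
    (hw : Tendsto w atTop (𝓝 0)) (h : ∀ n ≥ N, u n - u (n + 1) ≤ w n - w (n + 1)) :
    ∀ n ≥ N, u n ≤ w n := by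
  have hv : Antitone fun m => w (m + N) - u (m + N) := antitone_nat_of_succ_le fun m => by
    have := h (m + N) (by omega)
    rw [Nat.add_right_comm]
    linarith
  have hlim : Tendsto (fun m => w (m + N) - u (m + N)) atTop (𝓝 0) := by
    simpa using (tendsto_add_atTop_iff_nat N).2 (hw.sub hu)
  intro n hn
  have := hv.le_of_tendsto hlim (n - N)
  rw [Nat.sub_add_cancel hn] at this
  linarith

lemma isBigO_of_sub_succ {h : ℕ → ℝ} {K : ℕ} (h0 : Tendsto h atTop (𝓝 0))
    (hd : (fun n => h n - h (n + 1)) =O[atTop] fun n : ℕ => ((n : ℝ)⁻¹) ^ (K + 2)) :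
    h =O[atTop] fun n : ℕ => ((n : ℝ)⁻¹) ^ (K + 1) := by
  obtain ⟨C, hC0, hC⟩ := hd.exists_pos
  obtain ⟨N, hN⟩ := eventually_atTop.1 hC.bound
  set w : ℕ → ℝ := fun n => 2 ^ (K + 1) * C * ((n : ℝ)⁻¹) ^ (K + 1)
  have hw : Tendsto w atTop (𝓝 0) := by
    simpa [w] using ((tendsto_inv_atTop_nhds_zero_nat (𝕜 := ℝ)).pow (K + 1)).const_mul
      (2 ^ (K + 1) * C)
  -- `w = 2^(K+1) C n^{-(K+1)}` decreases faster than `±h`, and all three tend to `0`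
  have hdw : ∀ n ≥ max N 1, |h n - h (n + 1)| ≤ w n - w (n + 1) := fun n hn => by
    have h1 := hN n (le_of_max_le_left hn)
    have h2 := mul_le_mul_of_nonneg_left
      (inv_natCast_pow_le_two_pow_mul_sub K (le_of_max_le_right hn)) hC0.le
    simp only [Real.norm_eq_abs, abs_pow, abs_inv, Nat.abs_cast] at h1
    simp only [w]
    push_cast
    linarith
  have hup := le_of_sub_succ_le h0 hw fun n hn => (le_abs_self _).trans (hdw n hn)
  have hlow := le_of_sub_succ_le (u := fun n => -h n) (by simpa using h0.neg) hw
    fun n hn => by simpa [neg_add_eq_sub] using (neg_le_abs _).trans (hdw n hn)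
  refine IsBigO.of_bound (2 ^ (K + 1) * C) (eventually_atTop.2 ⟨max N 1, fun n hn => ?_⟩)
  rw [Real.norm_eq_abs, Real.norm_eq_abs, abs_le, abs_of_nonneg (by positivity)]
  exact ⟨by linarith [hlow n hn], hup n hn⟩

lemma constantCoeff_inv_one_add_X {k : Type*} [Field k] : constantCoeff ((1 + X : k⟦X⟧)⁻¹) = 1 := by
  simp [constantCoeff_inv]

lemma coeff_one_inv_one_add_X {k : Type*} [Field k] : coeff 1 ((1 + X : k⟦X⟧)⁻¹) = -1 := by
  have h := congrArg (coeff 1) (PowerSeries.mul_inv_cancel (1 + X : k⟦X⟧) (by simp))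
  rw [add_mul, one_mul, map_add, coeff_succ_X_mul, coeff_zero_eq_constantCoeff_apply,
    constantCoeff_inv_one_add_X, coeff_one, if_neg one_ne_zero] at h
  exact eq_neg_of_add_eq_zero_left h

/-- The expansion of `(n + 1)⁻¹ = n⁻¹ (1 + n⁻¹)⁻¹`, so that `shiftDiff p` is the expansion of
`p (1/n) - p (1/(n+1))`. -/
def shiftSeries : ℝ⟦X⟧ := X * (1 + X)⁻¹

def shiftDiff (p : ℝ[X]) : ℝ⟦X⟧ := (p : ℝ⟦X⟧) - Polynomial.aeval shiftSeries p

lemma shiftDiff_X_pow (j : ℕ) :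
    shiftDiff (Polynomial.X ^ j) = X ^ j * (1 - ((1 + X : ℝ⟦X⟧)⁻¹) ^ j) := by
  simp [shiftDiff, shiftSeries, mul_pow, mul_sub]

lemma coeff_shiftDiff_X_pow_of_le {i j : ℕ} (h : i ≤ j) :
    coeff i (shiftDiff (Polynomial.X ^ j)) = 0 := by
  rw [shiftDiff_X_pow, coeff_X_pow_mul']
  split_ifs with hji
  · obtain rfl : i = j := le_antisymm h hji
    simp
  · rfl

lemma coeff_succ_shiftDiff_X_pow (j : ℕ) :
    coeff (j + 1) (shiftDiff (Polynomial.X ^ j)) = j := by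
  rw [shiftDiff_X_pow, coeff_X_pow_mul', if_pos j.le_succ, Nat.add_sub_cancel_left, map_sub,
    coeff_one_pow, coeff_one_inv_one_add_X, constantCoeff_inv_one_add_X]
  simp

lemma hasExpansion_inv_add_one (K : ℕ) :
    HasExpansion K (fun n => ((n : ℝ) + 1)⁻¹) shiftSeries := by
  have hX := hasExpansion_eval Polynomial.X K
  have hinv := (hasExpansion_eval (1 + Polynomial.X) K).inv (by simp)
  simp only [Polynomial.eval_X, Polynomial.eval_add, Polynomial.eval_one, Polynomial.coe_X,
    Polynomial.coe_add, Polynomial.coe_one] at hX hinv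
  refine (hX.mul hinv).congr (eventually_atTop.2 ⟨1, fun n hn => ?_⟩)
  field_simp

lemma hasExpansion_shiftDiff (p : ℝ[X]) (K : ℕ) :
    HasExpansion K (fun n => p.eval (n : ℝ)⁻¹ - p.eval ((n : ℝ) + 1)⁻¹) (shiftDiff p) :=
  (hasExpansion_eval p K).sub ((hasExpansion_inv_add_one K).aeval p)

/-- A polynomial of degree `≤ K` without constant term whose `shiftDiff` agrees with `ε` up to
degree `K + 1`: as `shiftDiff (X ^ j) = j X^(j+1) + ⋯`, its coefficients are solved for one at a
time. -/
def antidiffPoly (ε : ℝ⟦X⟧) : ℕ → ℝ[X]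
  | 0 => 0
  | K + 1 => antidiffPoly ε K + Polynomial.monomial (K + 1)
      ((coeff (K + 2) ε - coeff (K + 2) (shiftDiff (antidiffPoly ε K))) / (K + 1))

def antidiff (ε : ℝ⟦X⟧) : ℝ⟦X⟧ := mk fun K => (antidiffPoly ε K).coeff K

lemma trunc_antidiff (ε : ℝ⟦X⟧) (K : ℕ) : trunc (K + 1) (antidiff ε) = antidiffPoly ε K := by
  induction K with
  | zero => ext i; simp [antidiff, antidiffPoly]
  | succ K ih =>
    have hK : (antidiffPoly ε K).coeff (K + 1) = 0 := by
      rw [← ih, coeff_trunc, if_neg (lt_irrefl _)]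
    rw [trunc_succ, ih, antidiff, coeff_mk, antidiffPoly, Polynomial.coeff_add, hK, zero_add,
      Polynomial.coeff_monomial_same]

lemma constantCoeff_antidiff (ε : ℝ⟦X⟧) : constantCoeff (antidiff ε) = 0 := by
  simp [← coeff_zero_eq_constantCoeff_apply, antidiff, antidiffPoly]

lemma coeff_one_antidiff (ε : ℝ⟦X⟧) : coeff 1 (antidiff ε) = coeff 2 ε := by
  simp [antidiff, antidiffPoly, shiftDiff]

lemma shiftDiff_add_monomial (p : ℝ[X]) (j : ℕ) (c : ℝ) :
    shiftDiff (p + Polynomial.monomial j c) =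
      shiftDiff p + C c * shiftDiff (Polynomial.X ^ j) := by
  simp only [shiftDiff, ← Polynomial.C_mul_X_pow_eq_monomial, map_add, map_mul,
    Polynomial.coe_add, Polynomial.coe_mul, Polynomial.coe_C, Polynomial.aeval_C,
    PowerSeries.algebraMap_apply, Algebra.algebraMap_self, RingHom.id_apply]
  ring

lemma coeff_shiftDiff_antidiffPoly {ε : ℝ⟦X⟧} (h0 : coeff 0 ε = 0) (h1 : coeff 1 ε = 0)
    (K : ℕ) :
    ∀ i ≤ K + 1, coeff i (shiftDiff (antidiffPoly ε K)) = coeff i ε := by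
  induction K with
  | zero =>
    intro i hi
    interval_cases i <;> simp [antidiffPoly, shiftDiff, h0, h1]
  | succ K ih =>
    intro i hi
    rw [antidiffPoly, shiftDiff_add_monomial, map_add, coeff_C_mul]
    obtain hi' | rfl := Nat.lt_or_eq_of_le hi
    · rw [coeff_shiftDiff_X_pow_of_le (by omega), mul_zero, add_zero, ih i (by omega)]
    · rw [coeff_succ_shiftDiff_X_pow]
      push_cast
      field_simp
      ring

theorem hasExpansion_of_sub_succ {h : ℕ → ℝ} {ε : ℝ⟦X⟧} (h0 : Tendsto h atTop (𝓝 0))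
    (hd : ∀ K, HasExpansion K (fun n => h n - h (n + 1)) ε) (hε0 : coeff 0 ε = 0)
    (hε1 : coeff 1 ε = 0) (K : ℕ) : HasExpansion K h (antidiff ε) := by
  set p := antidiffPoly ε K with hp
  have hp0 : p.eval 0 = 0 := by
    rw [← Polynomial.coeff_zero_eq_eval_zero, hp, ← trunc_antidiff, coeff_trunc, if_pos K.succ_pos,
      coeff_zero_eq_constantCoeff_apply, constantCoeff_antidiff]
  have hr0 : Tendsto (fun n : ℕ => h n - p.eval (n : ℝ)⁻¹) atTop (𝓝 0) := by
    simpa [hp0] using h0.sub ((p.continuous.tendsto 0).comp tendsto_inv_atTop_nhds_zero_nat)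
  have hdr : HasExpansion (K + 1)
      (fun n : ℕ => (h n - p.eval (n : ℝ)⁻¹) - (h (n + 1) - p.eval ((n + 1 : ℕ) : ℝ)⁻¹))
      (ε - shiftDiff p) :=
    ((hd (K + 1)).sub (hasExpansion_shiftDiff p (K + 1))).congr
      (Eventually.of_forall fun n => by push_cast; ring)
  have htrunc : trunc (K + 2) (ε - shiftDiff p) = 0 := by
    ext i
    rw [coeff_trunc]
    split_ifs with hi
    · exact sub_eq_zero.2 (coeff_shiftDiff_antidiffPoly hε0 hε1 K i (by omega)).symm
    · rfl
  rw [HasExpansion, trunc_antidiff]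
  exact isBigO_of_sub_succ hr0 (hdr.isBigO_of_trunc_eq_zero htrunc)

lemma hasExpansion_mul_log_one_add_inv (K : ℕ) :
    HasExpansion K (fun n => n * Real.log (1 + (n : ℝ)⁻¹)) (mk fun i => (-1) ^ i / (i + 1)) := by
  refine IsBigO.of_bound 2 (eventually_atTop.2 ⟨2, fun n hn => ?_⟩)
  have hn' : (2 : ℝ) ≤ n := by exact_mod_cast hn
  set x := (n : ℝ)⁻¹ with hx
  have hx0 : 0 < x := by positivity
  have hx2 : x ≤ 1 / 2 := by rw [hx, one_div]; exact inv_anti₀ two_pos hn'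
  have hsum : (trunc (K + 1) (mk fun i => (-1 : ℝ) ^ i / (i + 1))).eval x
      = x⁻¹ * -∑ i ∈ Finset.range (K + 1), (-x) ^ (i + 1) / (i + 1) := by
    rw [Polynomial.eval, eval₂_trunc_eq_sum_range, mul_neg, Finset.mul_sum,
      ← Finset.sum_neg_distrib]
    refine Finset.sum_congr rfl fun i _ => ?_
    rw [coeff_mk, RingHom.id_apply, pow_succ, neg_pow x]
    field_simp
  have hlog := Real.abs_log_sub_add_sum_range_le (x := -x)
    (by rw [abs_neg, abs_of_pos hx0]; linarith) (K + 1)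
  rw [sub_neg_eq_add, abs_neg, abs_of_pos hx0, add_comm] at hlog
  dsimp only
  rw [hsum, show (n : ℝ) = x⁻¹ by rw [hx, inv_inv], ← mul_sub, sub_neg_eq_add, Real.norm_eq_abs,
    Real.norm_eq_abs, abs_mul, abs_inv, abs_of_pos hx0, abs_pow, abs_of_pos hx0]
  calc x⁻¹ * |_| ≤ x⁻¹ * (x ^ (K + 1 + 1) / (1 - x)) := by rw [inv_inv]; gcongr
    _ ≤ x⁻¹ * (x ^ (K + 1 + 1) / (1 / 2)) := by gcongr; linarith
    _ = 2 * x ^ (K + 1) := by field_simp; ring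

lemma log_stirlingSeq_sub_log_stirlingSeq_succ {n : ℕ} (hn : n ≠ 0) :
    Real.log (Stirling.stirlingSeq n) - Real.log (Stirling.stirlingSeq (n + 1)) =
      (n + 1 / 2) * Real.log (1 + (n : ℝ)⁻¹) - 1 := by
  have hn' : (0 : ℝ) < n := by positivity
  have h1 : 1 + (n : ℝ)⁻¹ = (n + 1) / n := by field_simp
  simp (disch := positivity) only [Stirling.log_stirlingSeq_formula, Real.log_div, Real.log_mul,
    Real.log_exp, Nat.factorial_succ, Nat.cast_mul, Nat.cast_succ, h1]
  ring

def stirlingDiffSeries : ℝ⟦X⟧ :=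
  1 - (1 + C (1 / 2) * X) * PowerSeries.mk fun i : ℕ => (-1 : ℝ) ^ i / (i + 1)

lemma hasExpansion_stirlingDiffSeries (K : ℕ) :
    HasExpansion K (fun n => 1 - (n + 1 / 2) * Real.log (1 + (n : ℝ)⁻¹)) stirlingDiffSeries := by
  have := (hasExpansion_eval 1 K).sub
    ((hasExpansion_eval (1 + Polynomial.C (1 / 2) * Polynomial.X) K).mul
      (hasExpansion_mul_log_one_add_inv K))
  simp only [Polynomial.coe_one, Polynomial.coe_add, Polynomial.coe_mul, Polynomial.coe_C,
    Polynomial.coe_X] at this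
  refine this.congr (eventually_atTop.2 ⟨1, fun n hn => ?_⟩)
  simp only [Polynomial.eval_one, Polynomial.eval_add, Polynomial.eval_mul, Polynomial.eval_C,
    Polynomial.eval_X]
  field_simp

lemma coeff_stirlingDiffSeries :
    coeff 0 stirlingDiffSeries = 0 ∧ coeff 1 stirlingDiffSeries = 0 ∧
      coeff 2 stirlingDiffSeries = -1 / 12 := by
  simp [stirlingDiffSeries, add_mul, mul_assoc, coeff_one, coeff_succ_X_mul]
  norm_num

def stirlingCoeffs : ℝ⟦X⟧ := expComp (antidiff stirlingDiffSeries)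

lemma coeff_one_stirlingCoeffs : coeff 1 stirlingCoeffs = -1 / 12 := by
  rw [stirlingCoeffs, coeff_one_expComp, coeff_one_antidiff, coeff_stirlingDiffSeries.2.2]

lemma hasExpansion_sqrt_pi_div_stirlingSeq (K : ℕ) :
    HasExpansion K (fun n => √Real.pi / Stirling.stirlingSeq n) stirlingCoeffs := by
  set μ : ℕ → ℝ := fun n => Real.log √Real.pi - Real.log (Stirling.stirlingSeq n)
  have hμ : Tendsto μ atTop (𝓝 0) := by
    have := (Real.continuousAt_log (Real.sqrt_pos.2 Real.pi_pos).ne').tendsto.comp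
      Stirling.tendsto_stirlingSeq_sqrt_pi
    simpa [μ] using (tendsto_const_nhds (x := Real.log √Real.pi)).sub this
  have hdμ (L : ℕ) : HasExpansion L (fun n => μ n - μ (n + 1)) stirlingDiffSeries :=
    (hasExpansion_stirlingDiffSeries L).congr (eventually_atTop.2 ⟨1, fun n hn => by
      have := log_stirlingSeq_sub_log_stirlingSeq_succ (n := n) (by omega)
      simp only [μ]
      linarith⟩)
  obtain ⟨h0, h1, -⟩ := coeff_stirlingDiffSeries
  refine ((hasExpansion_of_sub_succ hμ hdμ h0 h1 K).exp (constantCoeff_antidiff _)).congr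
    (eventually_atTop.2 ⟨1, fun n hn => ?_⟩)
  obtain ⟨m, rfl⟩ := Nat.exists_eq_add_of_le' hn
  simp only [μ]
  rw [Real.exp_sub, Real.exp_log (by positivity), Real.exp_log (Stirling.stirlingSeq'_pos m)]

lemma pow_mul_exp_neg_div_factorial_pred {n : ℕ} (hn : n ≠ 0) :
    (n : ℝ) ^ n * Real.exp (-(n : ℝ)) / ((n - 1).factorial : ℝ) =
      √((n : ℝ) / (2 * Real.pi)) * (√Real.pi / Stirling.stirlingSeq n) := by
  obtain ⟨m, rfl⟩ := Nat.exists_eq_add_of_le' (Nat.one_le_iff_ne_zero.2 hn)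
  have hsqrt : √((↑(m + 1) : ℝ) / (2 * Real.pi)) * √Real.pi * √(2 * ↑(m + 1)) = ↑(m + 1) := by
    rw [← Real.sqrt_mul (by positivity), ← Real.sqrt_mul (by positivity),
      show (↑(m + 1) : ℝ) / (2 * Real.pi) * Real.pi * (2 * ↑(m + 1)) = (↑(m + 1)) ^ 2 by
        field_simp,
      Real.sqrt_sq (by positivity)]
  rw [Stirling.stirlingSeq, Nat.add_sub_cancel, Nat.factorial_succ, div_pow, Real.exp_one_pow,
    Real.exp_neg]
  field_simp
  push_cast at hsqrt ⊢
  rw [mul_comm ((m : ℝ) + 1) 2]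
  linear_combination -(m.factorial : ℝ) * hsqrt

end

/-- Stirling's series: there are real numbers `b 0 = 1`, `b 1 = −1/12`, … such that for
every `k` there is a constant `C_k` with
`|nⁿe^{−n}/(n−1)! − √(n/(2π))·(b₀ + b₁/n + ⋯ + b_k/n^k)| ≤ C_k·√(n/(2π))·n^{−k−1}`
for all positive integers `n`. -/
theorem stirling_series_expansion :
    ∃ b : ℕ → ℝ, b 0 = 1 ∧ b 1 = -1 / 12 ∧
      ∀ k : ℕ, ∃ C : ℝ, ∀ n : ℕ, 1 ≤ n →
        |(n : ℝ) ^ n * Real.exp (-(n : ℝ)) / (Nat.factorial (n - 1) : ℝ) -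
            Real.sqrt ((n : ℝ) / (2 * Real.pi)) *
              ∑ j ∈ Finset.range (k + 1), b j / (n : ℝ) ^ j| ≤
          C * Real.sqrt ((n : ℝ) / (2 * Real.pi)) / (n : ℝ) ^ (k + 1) := by
  refine ⟨fun j => coeff j stirlingCoeffs, coeff_zero_expComp _, coeff_one_stirlingCoeffs,
    fun k => ?_⟩
  obtain ⟨C, hC⟩ := (hasExpansion_sqrt_pi_div_stirlingSeq k).exists_bound
  refine ⟨C, fun n hn => ?_⟩
  rw [pow_mul_exp_neg_div_factorial_pred (by omega), ← mul_sub, abs_mul,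
    abs_of_nonneg (Real.sqrt_nonneg _), mul_comm C, mul_div_assoc]
  exact mul_le_mul_of_nonneg_left (hC n hn) (Real.sqrt_nonneg _)
end

section
/- lim_{n→∞} e^{−n}·∑_{j=0}^{n−1} n^j/j! = 1/2. Equivalently, for every z ∈ ℂ with |z| = 1, the diagonal of the Ginibre kernel satisfies K_n(z,z) = (n/2)·(1 + o(1)) as n → ∞. -/
open Complex Filter

/-!
`e^{-n} ∑_{j<n} n^j/j!` is the probability that a Poisson variable of rate `n` is less than `n`.
Such a variable is a sum `S_n` of `n` independent Poisson variables of rate `1`, which have mean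
and variance `1`, so by the central limit theorem `P(S_n < n) = P((S_n - n)/√n < 0)` tends to
the probability `1/2` that a standard Gaussian is negative. On the unit circle the diagonal of the
Ginibre kernel is `n` times this probability.
-/

open MeasureTheory ProbabilityTheory Set
open scoped NNReal Nat Topology

namespace ProbabilityTheory

variable (r : ℝ≥0)

lemma poissonMeasure_zero : Po(0) = Measure.dirac 0 := by
  ext s hs
  rw [poissonMeasure, Measure.sum_apply _ hs, tsum_eq_single 0 (fun n hn ↦ by simp [hn])]
  simp

lemma poissonMeasure_real_Iio (n : ℕ) :
    Po(r).real (Iio n) = ∑ j ∈ Finset.range n, Real.exp (-r) * r ^ j / j ! := by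
  rw [← Finset.coe_range, ← sum_measureReal_singleton]
  simp only [poissonMeasure_real_singleton]

lemma measureReal_map_cast_poissonMeasure_Iio (n : ℕ) :
    Po(ℝ, r).real (Iio (n : ℝ)) = Po(r).real (Iio n) := by
  rw [map_measureReal_apply (by fun_prop) measurableSet_Iio]
  congr 1
  ext j
  simp

/-- Stein's identity `E[X g(X)] = r E[g(X + 1)]` for `X` of law `Po(r)`. -/
lemma hasSum_poisson_natCast_mul_of_hasSum_succ {g : ℕ → ℝ} {a : ℝ}
    (hg : HasSum (fun n ↦ Real.exp (-r) * r ^ n / n ! * g (n + 1)) a) :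
    HasSum (fun n ↦ Real.exp (-r) * r ^ n / n ! * (n * g n)) (r * a) := by
  rw [← hasSum_nat_add_iff' 1, Finset.sum_range_one, Nat.cast_zero, zero_mul, mul_zero, sub_zero]
  have hshift :
      (fun n : ℕ ↦ Real.exp (-r) * r ^ (n + 1) / (n + 1) ! * ((n + 1 : ℕ) * g (n + 1))) =
        fun n ↦ r * (Real.exp (-r) * r ^ n / n ! * g (n + 1)) := by
    funext n
    rw [Nat.factorial_succ]
    push_cast
    field_simp
    ring
  rw [hshift]
  exact hg.mul_left _

lemma hasSum_poisson_mul_natCast :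
    HasSum (fun n ↦ Real.exp (-r) * r ^ n / n ! * n) r := by
  have h := hasSum_poisson_natCast_mul_of_hasSum_succ r (g := fun _ ↦ 1)
    (by simpa only [mul_one] using hasSum_one_poissonMeasure r)
  simpa only [mul_one] using h

lemma hasSum_poisson_mul_natCast_sq :
    HasSum (fun n ↦ Real.exp (-r) * r ^ n / n ! * n ^ 2) (r * (r + 1)) := by
  have hsucc := (hasSum_poisson_mul_natCast r).add (hasSum_one_poissonMeasure r)
  have h := hasSum_poisson_natCast_mul_of_hasSum_succ r (g := fun n ↦ n)
    (by simpa [mul_add] using hsucc)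
  simpa only [sq] using h

lemma integral_map_cast_poissonMeasure_of_measurable {f : ℝ → ℝ} (hf : Measurable f) :
    ∫ x, f x ∂Po(ℝ, r) = ∑' n, Real.exp (-r) * r ^ n / n ! * f n := by
  rw [integral_map .of_discrete hf.aestronglyMeasurable, integral_poissonMeasure]
  rfl

lemma integral_id_map_cast_poissonMeasure : ∫ x, x ∂Po(ℝ, r) = r := by
  rw [integral_map_cast_poissonMeasure_of_measurable r (f := fun x ↦ x) measurable_id]
  exact (hasSum_poisson_mul_natCast r).tsum_eq

lemma memLp_two_id_map_cast_poissonMeasure : MemLp id 2 Po(ℝ, r) := by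
  rw [memLp_two_iff_integrable_sq aestronglyMeasurable_id,
    integrable_map_measure (by fun_prop) .of_discrete, integrable_poissonMeasure_iff]
  simpa using (hasSum_poisson_mul_natCast_sq r).summable

lemma variance_id_map_cast_poissonMeasure : Var[id; Po(ℝ, r)] = r := by
  have hsq : ∫ x, x ^ 2 ∂Po(ℝ, r) = r * (r + 1) := by
    rw [integral_map_cast_poissonMeasure_of_measurable r (by fun_prop)]
    exact (hasSum_poisson_mul_natCast_sq r).tsum_eq
  rw [variance_eq_sub (memLp_two_id_map_cast_poissonMeasure r)]
  simp only [Pi.pow_apply, id, hsq, integral_id_map_cast_poissonMeasure]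
  ring

lemma iIndepFun.hasLaw_sum_map_cast_poissonMeasure {R Ω : Type*} [AddCommMonoidWithOne R]
    [MeasurableSpace R] [MeasurableAdd₂ R] {mΩ : MeasurableSpace Ω} {P : Measure Ω}
    [IsProbabilityMeasure P] {X : ℕ → Ω → R} (hmeas : ∀ i, Measurable (X i))
    (hlaw : ∀ i, HasLaw (X i) Po(R, r) P) (hindep : iIndepFun X P) (n : ℕ) :
    HasLaw (∑ k ∈ Finset.range n, X k) Po(R, n * r) P := by
  induction n with
  | zero =>
    rw [Finset.sum_range_zero, Nat.cast_zero, zero_mul, poissonMeasure_zero,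
      Measure.map_dirac' measurable_from_nat, Nat.cast_zero]
    exact hasLaw_dirac_of_ae_eq (by rfl)
  | succ n ih =>
    rw [Finset.sum_range_succ, Nat.cast_succ, add_one_mul]
    have hlast := hindep.indepFun_finsetSum_of_notMem hmeas (Finset.notMem_range_self (n := n))
    exact hlast.hasLaw_add_map_cast_poissonMeasure ih (hlaw n)

lemma gaussianReal_Iio_self (μ : ℝ) {v : ℝ≥0} (hv : v ≠ 0) :
    gaussianReal μ v (Iio μ) = 1 / 2 := by
  have : NullSingletonClass (gaussianReal μ v) := nullSingletonClass_gaussianReal hv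
  have hreflect : (gaussianReal μ v).map (2 * μ - ·) = gaussianReal μ v := by
    rw [gaussianReal_map_const_sub]
    ring_nf
  have hsymm : gaussianReal μ v (Ici μ) = gaussianReal μ v (Iio μ) := by
    rw [← measure_congr Ioi_ae_eq_Ici]
    conv_lhs => rw [← hreflect, Measure.map_apply (by fun_prop) measurableSet_Ioi]
    congr 1
    ext x
    rw [mem_preimage, mem_Ioi, mem_Iio]
    constructor <;> intro <;> linarith
  have htotal := measure_add_measure_compl (μ := gaussianReal μ v) (measurableSet_Iio (a := μ))
  rw [compl_Iio, hsymm, measure_univ, ← two_mul] at htotal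
  rw [ENNReal.eq_div_iff two_ne_zero ENNReal.ofNat_ne_top, htotal]

theorem tendsto_measureReal_sum_lt_mul_integral {Ω : Type*} {mΩ : MeasurableSpace Ω}
    {P : Measure Ω} [IsProbabilityMeasure P] {X : ℕ → Ω → ℝ} (hX : MemLp (X 0) 2 P)
    (hvar : Var[X 0; P] ≠ 0) (hindep : iIndepFun X P)
    (hident : ∀ i, IdentDistrib (X i) (X 0) P P) :
    Tendsto (fun n : ℕ ↦ P.real {ω | ∑ k ∈ Finset.range n, X k ω < n * P[X 0]}) atTop
      (𝓝 (1 / 2)) := by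
  have hv : Var[X 0; P].toNNReal ≠ 0 := by
    simpa using (variance_nonneg (X 0) P).lt_of_ne' hvar
  have hclt := tendstoInDistribution_inv_sqrt_mul_sum_sub (P' := gaussianReal 0 _) (Y := id)
    HasLaw.id hX hindep hident
  have hnegative := ProbabilityMeasure.tendsto_measure_of_null_frontier_of_tendsto'
    hclt.tendsto (E := Iio 0) (by
      have : NullSingletonClass (gaussianReal 0 _) := nullSingletonClass_gaussianReal hv
      simp)
  simp only [ProbabilityMeasure.coe_mk, Measure.map_id, gaussianReal_Iio_self 0 hv] at hnegative
  have hreal := (ENNReal.tendsto_toReal (by norm_num)).comp hnegative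
  rw [ENNReal.toReal_div, ENNReal.toReal_one, ENNReal.toReal_ofNat] at hreal
  refine hreal.congr' ?_
  filter_upwards [eventually_gt_atTop 0] with n hn
  have hscale : (0 : ℝ) < (√n)⁻¹ := by positivity
  rw [Function.comp_apply, ← measureReal_def,
    map_measureReal_apply_of_aemeasurable (hclt.forall_aemeasurable n) measurableSet_Iio]
  congr 1
  ext ω
  simp [mul_neg_iff, hscale, hscale.not_gt]

theorem tendsto_poissonMeasure_real_Iio_self :
    Tendsto (fun n : ℕ ↦ Po((n : ℝ≥0)).real (Iio n)) atTop (𝓝 (1 / 2)) := by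
  obtain ⟨Ω, _, P, X, hmeas, hlaw, hindep, _⟩ := exists_iid ℕ Po(ℝ, 1)
  have hmean : P[X 0] = 1 := by
    rw [(hlaw 0).integral_eq, integral_id_map_cast_poissonMeasure, NNReal.coe_one]
  have hvar : Var[X 0; P] = 1 := by
    rw [(hlaw 0).variance_eq, variance_id_map_cast_poissonMeasure, NNReal.coe_one]
  have hmemLp : MemLp (X 0) 2 P := by
    have h := memLp_two_id_map_cast_poissonMeasure 1
    rwa [← (hlaw 0).map_eq, memLp_map_measure_iff aestronglyMeasurable_id
      (hmeas 0).aemeasurable] at h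
  have hident (i : ℕ) : IdentDistrib (X i) (X 0) P P :=
    ⟨(hmeas i).aemeasurable, (hmeas 0).aemeasurable, (hlaw i).map_eq.trans (hlaw 0).map_eq.symm⟩
  refine (tendsto_measureReal_sum_lt_mul_integral hmemLp (by simp [hvar]) hindep hident).congr
    fun n ↦ ?_
  have hsum := iIndepFun.hasLaw_sum_map_cast_poissonMeasure 1 hmeas hlaw hindep n
  simp only [hmean, mul_one] at hsum ⊢
  rw [← measureReal_map_cast_poissonMeasure_Iio]
  have hevent := hsum.measureReal_eq (p := (· < (n : ℝ))) measurableSet_Iio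
  simp only [Finset.sum_apply] at hevent
  exact hevent

end ProbabilityTheory

lemma tendsto_exp_neg_mul_sum_pow_div_factorial :
    Tendsto (fun n : ℕ ↦ Real.exp (-n) * ∑ j ∈ Finset.range n, (n : ℝ) ^ j / j !) atTop
      (𝓝 (1 / 2)) := by
  refine tendsto_poissonMeasure_real_Iio_self.congr fun n ↦ ?_
  simp only [poissonMeasure_real_Iio, Finset.mul_sum, mul_div_assoc, NNReal.coe_natCast]

lemma ginibreK_self_of_norm_eq_one {z : ℂ} (hz : ‖z‖ = 1) (n : ℕ) :
    ginibreK n z z =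
      n * ((Real.exp (-n) * ∑ j ∈ Finset.range n, (n : ℝ) ^ j / j ! : ℝ) : ℂ) := by
  have hzz : z * (starRingEnd ℂ) z = 1 := by
    rw [mul_conj, normSq_eq_norm_sq, hz]
    norm_num
  rw [ginibreK, mul_assoc _ z, hzz, hz]
  push_cast
  rw [mul_one, mul_comm (Complex.exp _)]
  ring_nf

/-- `lim_{n→∞} e^{−n}·∑_{j<n} n^j/j! = 1/2`; equivalently, for `|z| = 1` the diagonal of
the Ginibre kernel satisfies `K_n(z,z) = (n/2)·(1 + o(1))` as `n → ∞`. -/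
theorem exp_partial_sum_diagonal_limit :
    Tendsto (fun n : ℕ =>
        Real.exp (-(n : ℝ)) * ∑ j ∈ Finset.range n, (n : ℝ) ^ j / (Nat.factorial j : ℝ))
      atTop (nhds (1 / 2)) ∧
    ∀ z : ℂ, ‖z‖ = 1 →
      Tendsto (fun n : ℕ => ginibreK n z z / ((n : ℂ) / 2)) atTop (nhds 1) := by
  refine ⟨tendsto_exp_neg_mul_sum_pow_div_factorial, fun z hz ↦ ?_⟩
  have htwice : Tendsto (fun n : ℕ ↦
      ((2 * (Real.exp (-n) * ∑ j ∈ Finset.range n, (n : ℝ) ^ j / j !) : ℝ) : ℂ)) atTop (𝓝 1) := by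
    have h := (tendsto_exp_neg_mul_sum_pow_div_factorial.const_mul 2).ofReal
    rwa [mul_one_div_cancel two_ne_zero, Complex.ofReal_one] at h
  refine htwice.congr' ?_
  filter_upwards [eventually_ne_atTop 0] with n hn
  rw [ginibreK_self_of_norm_eq_one hz]
  field_simp
  push_cast
  ring
end

section
/- Let z, w ∈ ℂ with |z| = |w| = 1 and z ≠ w. Then lim_{n→∞} √(2π/n) · (conj(z)·w)^n · K_n(z,w) = 1/(z·conj(w) − 1). In other words, up to the unimodular cocycle c_n(z,w) = (z·conj(w))^n, the Ginibre kernel satisfies K_n(z,w) ∼ √(2πn)·S(z,w)·c_n(z,w) with Szegő kernel S(z,w) = (1/(2π))·1/(z·conj(w) − 1). -/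
/-!
On the unit circle put `v = z̄ w`, so that `z w̄ = v⁻¹`. Reversing the order of summation in
`K_n(z, w)` gives `√(2π/n) vⁿ K_n(z, w) = c_n (∑_{m ≤ n} vᵐ a_{n,m} - 1)` with
`a_{n,m} = n! / ((n - m)! nᵐ)` and `c_n = √(2π/n) nⁿ⁺¹ e⁻ⁿ / n! → 1` by Stirling's formula.
The weights fall from `a_{n,0} = 1` to `a_{n,n+1} = 0` with increments `-(m/n) a_{n,m}`, so two
Abel summations show `∑_{m ≤ n} vᵐ a_{n,m} → 1 / (1 - v)` for `‖v‖ ≤ 1`, `v ≠ 1`, as soon as the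
total variation of `m ↦ (m/n) a_{n,m}` tends to zero. That sequence vanishes at both ends and
increases only while `m (m + 1) < n`, each time by at most `1/n`, so its total variation is at
most `2 (√n + 1) / n`.
-/

open Complex Filter

open Finset Topology Asymptotics Real ComplexConjugate

theorem one_sub_mul_sum_range_pow_mul {R : Type*} [CommRing R] (v : R) (f : ℕ → R) (N : ℕ) :
    (1 - v) * ∑ m ∈ range N, v ^ m * f m
      = f 0 - v ^ N * f N + ∑ m ∈ range N, v ^ (m + 1) * (f (m + 1) - f m) := by
  induction N with
  | zero => simp
  | succ N ih =>
    rw [sum_range_succ, mul_add, ih, sum_range_succ]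
    ring

theorem norm_one_sub_mul_sum_range_pow_mul_le {𝕜 : Type*} [NormedField 𝕜] {v : 𝕜}
    (hv : ‖v‖ ≤ 1) {f : ℕ → 𝕜} {N : ℕ} (h0 : f 0 = 0) (hN : f N = 0) :
    ‖(1 - v) * ∑ m ∈ range N, v ^ m * f m‖ ≤ ∑ m ∈ range N, ‖f (m + 1) - f m‖ := by
  rw [one_sub_mul_sum_range_pow_mul, h0, hN, mul_zero, sub_zero, zero_add]
  refine (norm_sum_le _ _).trans (sum_le_sum fun m _ => ?_)
  rw [norm_mul, norm_pow]
  exact mul_le_of_le_one_left (norm_nonneg _) (pow_le_one₀ (norm_nonneg _) hv)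

theorem sum_range_abs_sub_eq_two_mul_sum_max {f : ℕ → ℝ} {N : ℕ} (h : f 0 = f N) :
    ∑ m ∈ range N, |f (m + 1) - f m| = 2 * ∑ m ∈ range N, max (f (m + 1) - f m) 0 := by
  have habs (x : ℝ) : |x| = 2 * max x 0 - x := by
    rcases le_total 0 x with hx | hx
    · rw [abs_of_nonneg hx, max_eq_left hx]; ring
    · rw [abs_of_nonpos hx, max_eq_right hx]; ring
  simp only [habs, ← mul_sum, sum_sub_distrib, sum_range_sub (f := f), h, sub_self, sub_zero]

noncomputable def descFactorialRatio (n m : ℕ) : ℝ := n.descFactorial m / (n : ℝ) ^ m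

namespace descFactorialRatio

variable {n m : ℕ}

theorem zero_right (n : ℕ) : descFactorialRatio n 0 = 1 := by
  simp [descFactorialRatio]

theorem of_lt (h : n < m) : descFactorialRatio n m = 0 := by
  simp [descFactorialRatio, Nat.descFactorial_of_lt h]

theorem nonneg : 0 ≤ descFactorialRatio n m := by
  unfold descFactorialRatio; positivity

theorem le_one : descFactorialRatio n m ≤ 1 := by
  unfold descFactorialRatio
  exact div_le_one_of_le₀ (by exact_mod_cast Nat.descFactorial_le_pow n m) (by positivity)

theorem succ (hn : n ≠ 0) :
    descFactorialRatio n (m + 1) = descFactorialRatio n m - m / n * descFactorialRatio n m := by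
  rcases le_or_gt m n with hm | hm
  · have hn' : (n : ℝ) ≠ 0 := by exact_mod_cast hn
    simp only [descFactorialRatio, Nat.descFactorial_succ, Nat.cast_mul, Nat.cast_sub hm]
    field_simp
    ring
  · rw [of_lt hm, of_lt (hm.trans m.lt_succ_self)]
    ring

theorem max_increment_le (hn : n ≠ 0) (m : ℕ) :
    max ((m + 1 : ℕ) / n * descFactorialRatio n (m + 1) - m / n * descFactorialRatio n m) 0
      ≤ if m ≤ Nat.sqrt n then (1 / n : ℝ) else 0 := by
  have hn' : (0 : ℝ) < n := by positivity
  have hdiff : (m + 1 : ℕ) / n * descFactorialRatio n (m + 1) - m / n * descFactorialRatio n m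
      = descFactorialRatio n m / n * (1 - m * (m + 1) / n) := by
    rw [succ hn]; push_cast; field_simp; ring
  have ha₀ : 0 ≤ descFactorialRatio n m / n := div_nonneg nonneg hn'.le
  rw [hdiff]
  split_ifs with hm
  · refine max_le ?_ (by positivity)
    calc descFactorialRatio n m / n * (1 - m * (m + 1) / n) ≤ descFactorialRatio n m / n :=
          mul_le_of_le_one_right ha₀ (sub_le_self _ (by positivity))
      _ ≤ 1 / n := div_le_div_of_nonneg_right le_one hn'.le
  · have hlt : (n : ℝ) < m * m := by exact_mod_cast Nat.sqrt_lt.mp (not_le.mp hm)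
    refine max_le (mul_nonpos_of_nonneg_of_nonpos ha₀ ?_) le_rfl
    rw [sub_nonpos, one_le_div hn']
    nlinarith

theorem sum_max_increment_le (hn : n ≠ 0) :
    ∑ m ∈ range (n + 1),
        max ((m + 1 : ℕ) / n * descFactorialRatio n (m + 1) - m / n * descFactorialRatio n m) 0
      ≤ (Nat.sqrt n + 1) / n := by
  calc _ ≤ ∑ m ∈ range (n + 1), if m ≤ Nat.sqrt n then (1 / n : ℝ) else 0 :=
        sum_le_sum fun m _ => max_increment_le hn m
    _ = ∑ m ∈ (range (n + 1)).filter (· ≤ Nat.sqrt n), (1 / n : ℝ) := (sum_filter _ _).symm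
    _ ≤ ∑ m ∈ range (Nat.sqrt n + 1), (1 / n : ℝ) := by
        refine sum_le_sum_of_subset_of_nonneg (fun m hm => ?_) fun _ _ _ => by positivity
        simp only [mem_filter, mem_range] at hm ⊢
        omega
    _ = (Nat.sqrt n + 1) / n := by simp [div_eq_mul_inv]

end descFactorialRatio

theorem tendsto_natSqrt_add_one_div :
    Tendsto (fun n : ℕ => ((Nat.sqrt n : ℝ) + 1) / n) atTop (𝓝 0) := by
  have hsqrt : Tendsto (fun n : ℕ => (√(n : ℝ))⁻¹) atTop (𝓝 0) :=
    tendsto_inv_atTop_zero.comp (Real.tendsto_sqrt_atTop.comp tendsto_natCast_atTop_atTop)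
  have hbound : Tendsto (fun n : ℕ => (√(n : ℝ))⁻¹ + 1 / n) atTop (𝓝 0) := by
    simpa using hsqrt.add tendsto_one_div_atTop_nhds_zero_nat
  refine squeeze_zero (fun n => by positivity) (fun n => ?_) hbound
  calc ((Nat.sqrt n : ℝ) + 1) / n = Nat.sqrt n / n + 1 / n := add_div _ _ _
    _ ≤ √(n : ℝ) / n + 1 / n := by gcongr; exact Real.nat_sqrt_le_real_sqrt
    _ = (√(n : ℝ))⁻¹ + 1 / n := by rw [Real.sqrt_div_self', one_div]

theorem norm_one_sub_mul_sum_pow_mul_div_mul_descFactorialRatio_le {v : ℂ} (hv : ‖v‖ ≤ 1) {n : ℕ} (hn : n ≠ 0) :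
    ‖(1 - v) * ∑ m ∈ range (n + 1), v ^ m * ((m / n * descFactorialRatio n m : ℝ) : ℂ)‖
      ≤ 2 * ((Nat.sqrt n + 1) / n) := by
  set d : ℕ → ℝ := fun m => m / n * descFactorialRatio n m
  have hd₀ : d 0 = 0 := by simp [d]
  have hd₁ : d (n + 1) = 0 := by
    simp only [d, descFactorialRatio.of_lt (Nat.lt_add_one n), mul_zero]
  calc _ ≤ ∑ m ∈ range (n + 1), ‖((d (m + 1) : ℝ) : ℂ) - d m‖ :=
        norm_one_sub_mul_sum_range_pow_mul_le (f := fun m => (d m : ℂ)) hv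
          (by simp only [hd₀, ofReal_zero]) (by simp only [hd₁, ofReal_zero])
    _ = ∑ m ∈ range (n + 1), |d (m + 1) - d m| := by
        simp only [← ofReal_sub, norm_real, Real.norm_eq_abs]
    _ = 2 * ∑ m ∈ range (n + 1), max (d (m + 1) - d m) 0 :=
        sum_range_abs_sub_eq_two_mul_sum_max (hd₀.trans hd₁.symm)
    _ ≤ 2 * ((Nat.sqrt n + 1) / n) := by
        gcongr; exact descFactorialRatio.sum_max_increment_le hn

theorem tendsto_sum_pow_mul_descFactorialRatio {v : ℂ} (hv : ‖v‖ ≤ 1) (hv₁ : v ≠ 1) :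
    Tendsto (fun n => ∑ m ∈ range (n + 1), v ^ m * (descFactorialRatio n m : ℂ)) atTop
      (𝓝 (1 / (1 - v))) := by
  set S : ℕ → ℂ := fun n => ∑ m ∈ range (n + 1), v ^ m * (descFactorialRatio n m : ℂ)
  set T : ℕ → ℂ := fun n =>
    ∑ m ∈ range (n + 1), v ^ m * ((m / n * descFactorialRatio n m : ℝ) : ℂ)
  have h₁ : (1 : ℂ) - v ≠ 0 := sub_ne_zero.mpr hv₁.symm
  have hST : ∀ᶠ n in atTop, (1 - v) * S n = 1 - v * T n := by
    filter_upwards [eventually_ne_atTop 0] with n hn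
    have hinc (m : ℕ) : (descFactorialRatio n (m + 1) : ℂ) - descFactorialRatio n m
        = -((m / n * descFactorialRatio n m : ℝ) : ℂ) := by
      rw [descFactorialRatio.succ hn]; push_cast; ring
    rw [one_sub_mul_sum_range_pow_mul (f := fun m => (descFactorialRatio n m : ℂ))]
    simp only [hinc, descFactorialRatio.zero_right, descFactorialRatio.of_lt (Nat.lt_add_one n),
      T, pow_succ, mul_sum]
    simp only [ofReal_one, ofReal_zero, mul_zero, sub_zero, mul_neg, sum_neg_distrib]
    rw [sub_eq_add_neg]
    congr 2
    exact sum_congr rfl fun m _ => by ring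
  have hT : Tendsto (fun n => (1 - v) * T n) atTop (𝓝 0) := by
    refine squeeze_zero_norm' ?_ (by simpa using tendsto_natSqrt_add_one_div.const_mul 2)
    filter_upwards [eventually_ne_atTop 0] with n hn
    exact norm_one_sub_mul_sum_pow_mul_div_mul_descFactorialRatio_le hv hn
  have hlim : Tendsto (fun n => ((1 - v) - v * ((1 - v) * T n)) / (1 - v) ^ 2) atTop
      (𝓝 (1 / (1 - v))) := by
    convert (tendsto_const_nhds.sub (hT.const_mul v)).div_const ((1 - v) ^ 2) using 2
    rw [mul_zero, sub_zero, sq, div_mul_cancel_right₀ h₁, one_div]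
  refine hlim.congr' ?_
  filter_upwards [hST] with n hn
  rw [div_eq_iff (pow_ne_zero 2 h₁)]
  linear_combination (v - 1) * hn

open Nat in
theorem pow_mul_sum_range_succ_pow_div_factorial {u v : ℂ} (huv : u * v = 1) {n : ℕ}
    (hn : n ≠ 0) :
    v ^ n * ∑ j ∈ range (n + 1), ((n : ℂ) * u) ^ j / j !
      = (n : ℂ) ^ n / n ! * ∑ m ∈ range (n + 1), v ^ m * (descFactorialRatio n m : ℂ) := by
  rw [← sum_range_reflect, mul_sum, mul_sum]
  refine sum_congr rfl fun m hm => ?_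
  have hmn : m ≤ n := Nat.lt_succ_iff.mp (mem_range.mp hm)
  have hfac : ((n - m)! : ℂ) * n.descFactorial m = n ! := by
    exact_mod_cast Nat.factorial_mul_descFactorial hmn
  have hv : v ^ n * ((n : ℂ) * u) ^ (n - m) = v ^ m * (n : ℂ) ^ (n - m) := by
    rw [← Nat.add_sub_cancel' hmn, pow_add, Nat.add_sub_cancel_left, mul_assoc, ← mul_pow,
      mul_left_comm, mul_comm v u, huv, mul_one]
  have hnpow : (n : ℂ) ^ n = (n : ℂ) ^ (n - m) * (n : ℂ) ^ m := by
    rw [← pow_add, Nat.sub_add_cancel hmn]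
  have hdesc : (n.descFactorial m : ℂ) ≠ 0 := by
    exact_mod_cast (Nat.descFactorial_pos.mpr hmn).ne'
  rw [show n + 1 - 1 - m = n - m by omega, descFactorialRatio, hnpow, ← hfac]
  push_cast
  field_simp
  rw [hv, mul_comm]

theorem tendsto_sqrt_two_pi_div_mul_pow_mul_exp_div_factorial :
    Tendsto (fun n : ℕ => √(2 * π / n) * (n : ℝ) ^ (n + 1) * Real.exp (-n) / n.factorial) atTop
      (𝓝 1) := by
  have h := (isEquivalent_iff_tendsto_one (Eventually.of_forall fun n => by positivity)).mp
    Stirling.factorial_isEquivalent_stirling.symm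
  refine h.congr' ?_
  filter_upwards [eventually_ne_atTop 0] with n hn
  have hn' : (0 : ℝ) < n := by positivity
  simp only [Pi.div_apply]
  congr 1
  rw [div_pow, Real.exp_neg, ← Real.exp_nat_mul, mul_one, show 2 * (n : ℝ) * π = 2 * π / n * (n : ℝ) ^ 2 by field_simp,
    Real.sqrt_mul (by positivity), Real.sqrt_sq hn'.le]
  ring

theorem ginibreK_of_norm_eq_one {z w : ℂ} (hz : ‖z‖ = 1) (hw : ‖w‖ = 1) (n : ℕ) :
    ginibreK n z w = n * (∑ j ∈ range n, ((n : ℂ) * (z * conj w)) ^ j / (Nat.factorial j : ℂ))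
      * Complex.exp (-n) := by
  rw [ginibreK, hz, hw]
  simp only [mul_assoc]
  congr 3
  push_cast
  ring

theorem mul_conj_mul_conj_mul_eq_one {z w : ℂ} (hz : ‖z‖ = 1) (hw : ‖w‖ = 1) :
    z * conj w * (conj z * w) = 1 := by
  rw [mul_mul_mul_comm, mul_conj', mul_comm (conj w), mul_conj', hz, hw]
  norm_num

theorem sqrt_mul_pow_mul_ginibreK_eq {z w : ℂ} (hz : ‖z‖ = 1) (hw : ‖w‖ = 1) {n : ℕ}
    (hn : n ≠ 0) :
    ((√(2 * π / n) : ℝ) : ℂ) * (conj z * w) ^ n * ginibreK n z w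
      = ((√(2 * π / n) * (n : ℝ) ^ (n + 1) * Real.exp (-n) / n.factorial : ℝ) : ℂ)
        * (∑ m ∈ range (n + 1), (conj z * w) ^ m * (descFactorialRatio n m : ℂ) - 1) := by
  have huv := mul_conj_mul_conj_mul_eq_one hz hw
  have hsum := pow_mul_sum_range_succ_pow_div_factorial huv hn
  have htop : (conj z * w) ^ n * ((n : ℂ) * (z * conj w)) ^ n = (n : ℂ) ^ n := by
    rw [← mul_pow, show conj z * w * (n * (z * conj w)) = n by linear_combination (n : ℂ) * huv]
  rw [sum_range_succ, mul_add, ← mul_div_assoc, htop] at hsum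
  rw [ginibreK_of_norm_eq_one hz hw]
  push_cast
  linear_combination ((√(2 * π / n) : ℝ) : ℂ) * n * Complex.exp (-n) * hsum

/-- Off-diagonal boundary asymptotics for the Ginibre kernel: for `|z| = |w| = 1` with
`z ≠ w`, one has `√(2π/n)·(z̄w)ⁿ·K_n(z,w) → 1/(z w̄ − 1)`; i.e. up to the cocycle
`(z w̄)ⁿ` the kernel behaves like `√(2πn)` times the Szegő kernel
`S(z,w) = (1/(2π))·1/(z w̄ − 1)`. -/
theorem ginibre_boundary_szego_kernel (z w : ℂ)
    (hz : ‖z‖ = 1) (hw : ‖w‖ = 1) (hzw : z ≠ w) :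
    Tendsto (fun n : ℕ =>
        ((Real.sqrt (2 * Real.pi / n) : ℝ) : ℂ) * ((starRingEnd ℂ) z * w) ^ n * ginibreK n z w)
      atTop (nhds (1 / (z * (starRingEnd ℂ) w - 1))) := by
  have huv := mul_conj_mul_conj_mul_eq_one hz hw
  have hv : ‖conj z * w‖ ≤ 1 := by simp [hz, hw]
  have hv₁ : conj z * w ≠ 1 := fun h => hzw <| by
    have hz' : z * conj z = 1 := by rw [mul_conj', hz]; norm_num
    linear_combination (-z) * h + w * hz'
  have hlim := (tendsto_sqrt_two_pi_div_mul_pow_mul_exp_div_factorial.ofReal).mul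
    ((tendsto_sum_pow_mul_descFactorialRatio hv hv₁).sub_const 1)
  have hlimit : ((1 : ℝ) : ℂ) * (1 / (1 - conj z * w) - 1) = 1 / (z * conj w - 1) := by
    have h₁ : 1 - conj z * w ≠ 0 := sub_ne_zero.mpr hv₁.symm
    have h₂ : z * conj w - 1 ≠ 0 := fun h => h₁ (by linear_combination (conj z * w) * h - huv)
    rw [ofReal_one, one_mul]
    field_simp
    linear_combination huv
  rw [hlimit] at hlim
  refine hlim.congr' ?_
  filter_upwards [eventually_ne_atTop 0] with n hn
  exact (sqrt_mul_pow_mul_ginibreK_eq hz hw hn).symm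
end

section
/- Cauchy transform of exterior harmonic measure of a disc: for every r > 0 and every z ∈ ℂ with |z| > r, (1/(2π))·∫_0^{2π} [(|z|² − r²)/|z − r·e^{iθ}|²] · (z − r·e^{iθ})^{−1} dθ = conj(z)/(|z|² − r²). -/
/-!
For `‖w‖ = r`, the exterior Poisson kernel of the disc at `z` coincides with the interior Poisson
kernel at the reflection `p = r² / z̄` of `z` in the circle, since `‖w - p‖ = r ‖z - w‖ / ‖z‖`.
The Cauchy kernel `w ↦ (z - w)⁻¹` is holomorphic on the closed disc, so the interior Poisson
formula evaluates the average to `(z - p)⁻¹ = z̄ / (‖z‖² - r²)`.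
-/

open Complex ComplexConjugate Metric Real

lemma norm_sub_div_conj_of_norm_eq {r : ℝ} {z w : ℂ} (hz : z ≠ 0) (hw : ‖w‖ = r) :
    ‖w - r ^ 2 / conj z‖ = r * ‖z - w‖ / ‖z‖ := by
  have hr2 : (r : ℂ) ^ 2 = w * conj w := by
    rw [mul_conj, normSq_eq_norm_sq, hw, ofReal_pow]
  have hconj : conj z ≠ 0 := (map_ne_zero _).2 hz
  have hfactor : w - r ^ 2 / conj z = w * conj (z - w) / conj z := by
    rw [hr2, map_sub]; field_simp
  rw [hfactor, norm_div, norm_mul, norm_conj, norm_conj, hw]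

lemma norm_sq_div_conj (r : ℝ) (z : ℂ) : ‖(r : ℂ) ^ 2 / conj z‖ = r ^ 2 / ‖z‖ := by
  rw [norm_div, norm_conj, norm_pow, norm_real, Real.norm_eq_abs, sq_abs]

lemma sq_div_conj_mem_ball {r : ℝ} {z : ℂ} (hr : 0 < r) (hz : r < ‖z‖) :
    (r : ℂ) ^ 2 / conj z ∈ ball 0 r := by
  rw [mem_ball_zero_iff, norm_sq_div_conj, div_lt_iff₀ (hr.trans hz)]
  nlinarith

lemma exterior_poissonKernel_eq_poissonKernel_div_conj {r : ℝ} {z w : ℂ} (hr : r ≠ 0)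
    (hz : z ≠ 0) (hw : ‖w‖ = r) :
    (‖z‖ ^ 2 - r ^ 2) / ‖z - w‖ ^ 2 = poissonKernel 0 (r ^ 2 / conj z) w := by
  have hscale : r ^ 2 / ‖z‖ ^ 2 ≠ 0 := by positivity
  simp only [poissonKernel_def, sub_zero]
  rw [norm_sub_div_conj_of_norm_eq hz hw, norm_sq_div_conj, hw, ← mul_div_mul_left _ _ hscale]
  congr 1 <;> field_simp

lemma inv_sub_div_conj (r : ℝ) (z : ℂ) :
    (z - r ^ 2 / conj z)⁻¹ = conj z / (((‖z‖ ^ 2 : ℝ) : ℂ) - (r : ℂ) ^ 2) := by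
  rcases eq_or_ne z 0 with rfl | hz
  · simp
  have hconj : conj z ≠ 0 := (map_ne_zero _).2 hz
  have hnormSq : ((‖z‖ ^ 2 : ℝ) : ℂ) = z * conj z := by
    rw [mul_conj, normSq_eq_norm_sq]
  rw [hnormSq, sub_div' hconj, inv_div]

lemma diffContOnCl_inv_const_sub {r : ℝ} {z : ℂ} (hz : r < ‖z‖) :
    DiffContOnCl ℂ (fun w ↦ (z - w)⁻¹) (ball 0 r) := by
  refine (DifferentiableOn.mono ?_ closure_ball_subset_closedBall).diffContOnCl
  exact (differentiableOn_const z).sub differentiableOn_id |>.inv fun w hw ↦ sub_ne_zero.2 <|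
    ne_of_apply_ne norm ((mem_closedBall_zero_iff.1 hw).trans_lt hz).ne'

/-- Cauchy transform of exterior harmonic measure of the disc `{|w| < r}`: for `|z| > r`,
`(1/(2π))·∫₀^{2π} [(|z|²−r²)/|z − re^{iθ}|²]·(z − re^{iθ})⁻¹ dθ = z̄/(|z|²−r²)`. -/
theorem cauchy_transform_exterior_harmonic_measure (r : ℝ) (hr : 0 < r)
    (z : ℂ) (hz : r < ‖z‖) :
    (1 / (2 * (Real.pi : ℂ))) * ∫ θ in (0 : ℝ)..(2 * Real.pi),
        (((‖z‖ ^ 2 - r ^ 2) /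
            ‖z - (r : ℂ) * Complex.exp ((θ : ℂ) * Complex.I)‖ ^ 2 : ℝ) : ℂ) /
          (z - (r : ℂ) * Complex.exp ((θ : ℂ) * Complex.I)) =
      (starRingEnd ℂ) z / (((‖z‖ ^ 2 : ℝ) : ℂ) - (r : ℂ) ^ 2) := by
  have hz0 : z ≠ 0 := norm_pos_iff.1 (hr.trans hz)
  calc _ = circleAverage (poissonKernel 0 (r ^ 2 / conj z) • fun w : ℂ ↦ (z - w)⁻¹) 0 r := by
        rw [circleAverage, Complex.real_smul, one_div, ofReal_inv, ofReal_mul, ofReal_ofNat]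
        refine congrArg _ (intervalIntegral.integral_congr fun θ _ ↦ ?_)
        have hw : ‖circleMap 0 r θ‖ = r := by rw [norm_circleMap_zero, abs_of_pos hr]
        rw [Pi.smul_apply', ← exterior_poissonKernel_eq_poissonKernel_div_conj hr.ne' hz0 hw,
          Complex.real_smul, div_eq_mul_inv _ (z - _), circleMap, zero_add]
    _ = (z - r ^ 2 / conj z)⁻¹ := (diffContOnCl_inv_const_sub hz).circleAverage_poissonKernel_smul
        (sq_div_conj_mem_ball hr hz)
    _ = _ := inv_sub_div_conj r z
end

section
/- Monotonicity gap of Ginibre obstacle functions: for all real numbers τ, τ′ with 0 < τ ≤ τ′ ≤ 1 and all real x ≥ τ′, one has (τ′·log(x/τ′) + τ′) − (τ·log(x/τ) + τ) ≥ (τ′ − τ)²/2. Equivalently, for the Ginibre potential Q(z) = |z|², the obstacle functions satisfy Q̌_{τ′}(z) − Q̌_τ(z) ≥ (τ′ − τ)²/2 for all z with |z|² ≥ τ′. -/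
/-!
The gap is `(τ' - τ) log (x / τ') + (τ' - τ - τ log (τ' / τ))`, and its first term is nonnegative
for `x ≥ τ'`. Writing `t = τ' / τ ≥ 1`, the bound `log t ≤ (t - t⁻¹) / 2` turns the second term into
at least `(τ' - τ)² / (2 τ')`, which is at least `(τ' - τ)² / 2` because `τ' ≤ 1`.
-/

open Real Set

namespace Real

lemma hasDerivAt_half_sub_inv_sub_log {t : ℝ} (ht : t ≠ 0) :
    HasDerivAt (fun s ↦ (s - s⁻¹) / 2 - log s) ((1 - t⁻¹) ^ 2 / 2) t := by
  refine ((((hasDerivAt_id' t).sub (hasDerivAt_inv ht)).div_const 2).sub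
    (hasDerivAt_log ht)).congr_deriv ?_
  field_simp
  ring

lemma monotoneOn_half_sub_inv_sub_log :
    MonotoneOn (fun s ↦ (s - s⁻¹) / 2 - log s) (Ioi 0) := by
  refine monotoneOn_of_hasDerivWithinAt_nonneg (f' := fun s ↦ (1 - s⁻¹) ^ 2 / 2) (convex_Ioi 0)
    (fun s hs ↦ (hasDerivAt_half_sub_inv_sub_log (ne_of_gt hs)).continuousAt.continuousWithinAt)
    (fun s hs ↦ ?_) (fun s _ ↦ by positivity)
  rw [interior_Ioi] at hs
  exact (hasDerivAt_half_sub_inv_sub_log (ne_of_gt hs)).hasDerivWithinAt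

lemma log_le_half_sub_inv {t : ℝ} (ht : 1 ≤ t) : log t ≤ (t - t⁻¹) / 2 := by
  have h := monotoneOn_half_sub_inv_sub_log (mem_Ioi.2 one_pos) (mem_Ioi.2 (by linarith)) ht
  simp only [inv_one, sub_self, zero_div, log_one] at h
  linarith

end Real

lemma sq_sub_div_le_sub_sub_mul_log_div {a b : ℝ} (ha : 0 < a) (hab : a ≤ b) :
    (b - a) ^ 2 / (2 * b) ≤ b - a - a * log (b / a) := by
  have hb : 0 < b := ha.trans_le hab
  have hlog := log_le_half_sub_inv ((one_le_div ha).2 hab)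
  have hsq : (b - a) ^ 2 / (2 * b) = b - a - a * ((b / a - (b / a)⁻¹) / 2) := by
    field_simp
    ring
  rw [hsq]
  gcongr

/-- Monotonicity gap of Ginibre obstacle functions: for `0 < τ ≤ τ' ≤ 1` and `x ≥ τ'`,
`(τ'·log(x/τ') + τ') − (τ·log(x/τ) + τ) ≥ (τ' − τ)²/2`.  (With `x = |z|²`, this says
`Q̌_{τ'}(z) − Q̌_τ(z) ≥ (τ' − τ)²/2` on the closed exterior of the `τ'`-droplet.) -/
theorem ginibre_obstacle_function_gap (τ τ' : ℝ) (h0 : 0 < τ) (h1 : τ ≤ τ') (h2 : τ' ≤ 1)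
    (x : ℝ) (hx : τ' ≤ x) :
    (τ' * Real.log (x / τ') + τ') - (τ * Real.log (x / τ) + τ) ≥ (τ' - τ) ^ 2 / 2 := by
  have hτ' : 0 < τ' := h0.trans_le h1
  have hx0 : 0 < x := hτ'.trans_le hx
  have hsplit : log (x / τ) = log (x / τ') + log (τ' / τ) := by
    rw [← log_mul (by positivity) (by positivity), div_mul_div_cancel₀ hτ'.ne']
  have hexterior : 0 ≤ (τ' - τ) * log (x / τ') :=
    mul_nonneg (sub_nonneg.2 h1) (log_nonneg ((one_le_div hτ').2 hx))
  have hboundary := sq_sub_div_le_sub_sub_mul_log_div h0 h1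
  have hmass : (τ' - τ) ^ 2 / 2 ≤ (τ' - τ) ^ 2 / (2 * τ') := by
    gcongr
    linarith
  rw [hsplit]
  linarith
end
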